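/- Let λ ∈ V be a dominant weight, let δ ∈ V* be a dominant coweight (⟨α_i, δ⟩ ≥ 0 for all i), and let u, v ∈ W with v ≤ u. If ⟨λ, uδ⟩ = ⟨λ, vδ⟩, then W_λ u W_δ = W_λ v W_δ, where W_λ := {σ ∈ W : σλ = λ} and W_δ := {σ ∈ W : σδ = δ}. -/

import Mathlib

open scoped Classical

/-- Data of a root system with a fixed choice of simple roots: an ambient
`ℚ`-vector space `V`, a set of roots `Φ` with a distinguished subset `pos` of
positive roots, a coroot functional `coroot β = ⟨·, β^∨⟩` for each root, and
simple roots `α 1, …, α r`. -/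
structure RootData where
  r : ℕ
  V : Type
  [grp : AddCommGroup V]
  [mod : Module ℚ V]
  Φ : Set V
  pos : Set V
  coroot : V → Module.Dual ℚ V
  α : Fin r → V

attribute [instance] RootData.grp RootData.mod

namespace RootData

variable (R : RootData)

/-- The group of linear automorphisms of `V`, in which the Weyl group lives. -/
abbrev Aut : Type := R.V ≃ₗ[ℚ] R.V

/-- The linear map `v ↦ v - ⟨v, β^∨⟩ β`. -/
noncomputable def reflMap (β : R.V) : R.V →ₗ[ℚ] R.V :=
  LinearMap.id - (R.coroot β).smulRight β

/-- The reflection `s_β` associated to a root `β`, as a linear automorphism. -/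
noncomputable def s (β : R.V) : R.Aut :=
  if h : (R.reflMap β).comp (R.reflMap β) = LinearMap.id then
    LinearEquiv.ofLinear (R.reflMap β) (R.reflMap β) h h
  else LinearEquiv.refl ℚ R.V

/-- The simple reflections `s_i := s_{α_i}`. -/
noncomputable def S (i : Fin R.r) : R.Aut := R.s (R.α i)

/-- The Weyl group `W`, generated by the simple reflections. -/
noncomputable def weylGroup : Subgroup R.Aut := Subgroup.closure (Set.range R.S)

/-- The product `s_{i_1} ⋯ s_{i_k}` of a word in the simple reflections. -/
noncomputable def wordProd (l : List (Fin R.r)) : R.Aut := (l.map R.S).prod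

/-- The length function on `W`: least length of a word in the simple
reflections expressing the given element. -/
noncomputable def len (w : R.Aut) : ℕ :=
  sInf {n | ∃ l : List (Fin R.r), l.length = n ∧ R.wordProd l = w}

/-- A word is reduced if its length equals the length of its product. -/
def Reduced (l : List (Fin R.r)) : Prop := R.len (R.wordProd l) = l.length

/-- The Bruhat order on `W`: `u ≤ w` iff some reduced word for `w` has a
subword whose product is `u`. -/
def BruhatLE (u w : R.Aut) : Prop :=
  ∃ l : List (Fin R.r), R.Reduced l ∧ R.wordProd l = w ∧
    ∃ l' : List (Fin R.r), l'.Sublist l ∧ R.wordProd l' = u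

/-- Strict Bruhat order. -/
def BruhatLT (u w : R.Aut) : Prop := R.BruhatLE u w ∧ u ≠ w

/-- One step of the Demazure product: `s_i * w := max {w, s_i w}`. -/
noncomputable def dmulStep (i : Fin R.r) (x : R.Aut) : R.Aut :=
  if R.len x < R.len (R.S i * x) then R.S i * x else x

/-- Demazure product of a word in the simple reflections against `w`:
`s_{i_1} * (s_{i_2} * (⋯ * (s_{i_k} * w)))`. -/
noncomputable def dmulList (l : List (Fin R.r)) (w : R.Aut) : R.Aut :=
  l.foldr R.dmulStep w

/-- The Demazure product `v * w` on the Weyl group, computed by choosing a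
reduced word for `v` (it is independent of this choice). -/
noncomputable def dmul (v w : R.Aut) : R.Aut :=
  if h : ∃ l : List (Fin R.r), R.Reduced l ∧ R.wordProd l = v then
    R.dmulList h.choose w
  else v * w

/-- The parabolic subgroup `W_{P_i}` generated by the simple reflections
`s_j`, `j ≠ i`. -/
noncomputable def WPar (i : Fin R.r) : Subgroup R.Aut :=
  Subgroup.closure (R.S '' {j | j ≠ i})

/-- `W^{P_i}`: the set of minimal-length representatives of cosets of
`W/W_{P_i}`. -/
def minReps (i : Fin R.r) : Set R.Aut :=
  {v | v ∈ R.weylGroup ∧ ∀ p ∈ R.WPar i, R.len v ≤ R.len (v * p)}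

/-- `u` is the minimal-length representative of the coset `w W_{P_i}`. -/
def IsMinRep (i : Fin R.r) (u w : R.Aut) : Prop :=
  u ∈ R.minReps i ∧ u⁻¹ * w ∈ R.WPar i

/-- A weight is dominant if it pairs nonnegatively with every simple coroot. -/
def Dominant (lam : R.V) : Prop := ∀ i : Fin R.r, 0 ≤ R.coroot (R.α i) lam

/-- The dual action of the Weyl group on `V* `: `(u f)(v) = f(u⁻¹ v)`. -/
noncomputable def dualAct (u : R.Aut) (f : Module.Dual ℚ R.V) : Module.Dual ℚ R.V :=
  f.comp (u.symm : R.V →ₗ[ℚ] R.V)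

/-- The Demazure polytope `P_λ^w := conv {uλ : u ∈ W, u ≤ w}`. -/
noncomputable def demPolytope (lam : R.V) (w : R.Aut) : Set R.V :=
  convexHull ℚ {m | ∃ u : R.Aut, u ∈ R.weylGroup ∧ R.BruhatLE u w ∧ m = u lam}

/-- Membership in the weight lattice `X`. -/
def IsWeight (lam : R.V) : Prop := ∀ β ∈ R.Φ, ∃ m : ℤ, R.coroot β lam = (m : ℚ)

/-- The root lattice `Q = ℤΦ`. -/
noncomputable def rootLattice : AddSubgroup R.V := AddSubgroup.closure R.Φ

/-- `w₀` is the longest element of the Weyl group. -/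
def IsLongest (w₀ : R.Aut) : Prop :=
  w₀ ∈ R.weylGroup ∧ ∀ g ∈ R.weylGroup, R.len g ≤ R.len w₀

/-- The positive roots `Φ_{P_i}⁺ = Φ⁺ ∩ span {α_j : j ≠ i}` of the standard
Levi subsystem. -/
def parPos (i : Fin R.r) : Set R.V :=
  {η | η ∈ R.pos ∧ η ∈ Submodule.span ℚ (R.α '' {j | j ≠ i})}

/-- The value `D_i (e^λ)` of the Demazure operator on a basis element of the
group ring `ℤ[X]`. -/
noncomputable def demOnBasis (i : Fin R.r) (lam : R.V) : R.V →₀ ℤ :=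
  if 0 ≤ ⌊R.coroot (R.α i) lam⌋ then
    ∑ k ∈ Finset.range (⌊R.coroot (R.α i) lam⌋.toNat + 1),
      Finsupp.single (lam - (k : ℚ) • R.α i) 1
  else if ⌊R.coroot (R.α i) lam⌋ = -1 then 0
  else - ∑ k ∈ Finset.range ((-⌊R.coroot (R.α i) lam⌋).toNat - 1),
      Finsupp.single (lam + ((k : ℚ) + 1) • R.α i) 1

/-- The Demazure operator `D_i`, as a `ℤ`-linear endomorphism of the group
ring `ℤ[X]` (realized as finitely supported functions `V →₀ ℤ`). -/
noncomputable def demOp (i : Fin R.r) : (R.V →₀ ℤ) →ₗ[ℤ] (R.V →₀ ℤ) :=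
  Finsupp.lsum ℤ fun lam => LinearMap.toSpanSingleton ℤ (R.V →₀ ℤ) (R.demOnBasis i lam)

/-- The Demazure character `D_{i_1} ⋯ D_{i_k} (e^λ)`. -/
noncomputable def demChar (l : List (Fin R.r)) (lam : R.V) : R.V →₀ ℤ :=
  l.foldr (fun i p => R.demOp i p) (Finsupp.single lam 1)

/-- The axioms of a finite crystallographic root system spanning `V`, with
simple roots `α_i` and positive roots `pos`. -/
structure IsRootSystem (R : RootData) : Prop where
  finite : R.Φ.Finite
  span_top : Submodule.span ℚ R.Φ = ⊤
  ne_zero : ∀ β ∈ R.Φ, β ≠ 0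
  coroot_self : ∀ β ∈ R.Φ, R.coroot β β = 2
  crystallographic : ∀ β ∈ R.Φ, ∀ γ ∈ R.Φ, ∃ m : ℤ, R.coroot β γ = (m : ℚ)
  reflection_stable : ∀ β ∈ R.Φ, ∀ γ ∈ R.Φ, γ - R.coroot β γ • β ∈ R.Φ
  simple_mem : ∀ i, R.α i ∈ R.Φ
  indep : LinearIndependent ℚ R.α
  pos_subset : R.pos ⊆ R.Φ
  pos_or_neg : ∀ β ∈ R.Φ, (β ∈ R.pos ∧ -β ∉ R.pos) ∨ (β ∉ R.pos ∧ -β ∈ R.pos)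
  simple_pos : ∀ i, R.α i ∈ R.pos
  pos_nonneg_comb : ∀ β ∈ R.pos, ∃ c : Fin R.r → ℚ, (∀ i, 0 ≤ c i) ∧ β = ∑ i, c i • R.α i

end RootData

/-!
Call `x → x s_β` a Bruhat step when `β` and `x β` are positive roots. If `v ≤ u`, then `u` is
reached from `v` by Bruhat steps: induct on a reduced word for `u`, using that its last letter
is an ascent (by the exchange condition) and that a step `x → x s_β` conjugates to a step
`x s_j → x s_β s_j` unless `s_β = s_j`.

Along a step the pairing `⟨λ, x δ⟩ = δ (x⁻¹ λ)` drops by `⟨λ, (xβ)^∨⟩ ⟨β, δ⟩`, a product of two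
nonnegative numbers because `λ` and `δ` are dominant. So `⟨λ, uδ⟩ = ⟨λ, vδ⟩` forces one factor
to vanish at every step: either `s_{xβ} ∈ W_λ`, and `x s_β = s_{xβ} x`, or `s_β ∈ W_δ`; in both
cases the double coset `W_λ x W_δ` does not change.

The facts about coroots behind this (`⟨λ, γ^∨⟩ ≥ 0` for positive `γ`, `s_{wγ} = w s_γ w⁻¹`,
`s_{cβ} = s_β`) come from the formula `⟨x, γ^∨⟩ = 2 (x, γ) / (γ, γ)` for an invariant positive
definite form, obtained by averaging a dot product over the finite group of automorphisms
preserving `Φ`.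
-/

namespace RootData

open Module Set Relation DoubleCoset
open scoped Pointwise

variable {R : RootData}

namespace IsRootSystem

theorem s_eq_reflection (hR : R.IsRootSystem) {β : R.V} (hβ : β ∈ R.Φ) :
    R.s β = reflection (hR.coroot_self β hβ) := by
  rw [RootData.s, dif_pos (LinearMap.ext fun x => involutive_preReflection (hR.coroot_self β hβ) x)]
  rfl

theorem s_apply (hR : R.IsRootSystem) {β : R.V} (hβ : β ∈ R.Φ) (x : R.V) :
    R.s β x = x - R.coroot β x • β := by
  rw [hR.s_eq_reflection hβ, reflection_apply]

theorem s_apply_self (hR : R.IsRootSystem) {β : R.V} (hβ : β ∈ R.Φ) : R.s β β = -β := by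
  rw [hR.s_eq_reflection hβ, reflection_apply_self]

theorem s_s (hR : R.IsRootSystem) {β : R.V} (hβ : β ∈ R.Φ) (x : R.V) : R.s β (R.s β x) = x := by
  rw [hR.s_eq_reflection hβ]
  exact involutive_reflection _ x

theorem s_inv (hR : R.IsRootSystem) {β : R.V} (hβ : β ∈ R.Φ) : (R.s β)⁻¹ = R.s β := by
  rw [hR.s_eq_reflection hβ, reflection_inv]

theorem s_mul_self (hR : R.IsRootSystem) {β : R.V} (hβ : β ∈ R.Φ) : R.s β * R.s β = 1 := by
  simpa only [hR.s_inv hβ] using inv_mul_cancel (R.s β)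

end IsRootSystem

abbrev rootStab (R : RootData) : Subgroup R.Aut := MulAction.stabilizer R.Aut R.Φ

theorem apply_mem_of_mem_rootStab {g : R.Aut} (hg : g ∈ R.rootStab) {β : R.V} (hβ : β ∈ R.Φ) :
    g β ∈ R.Φ := by
  rw [← MulAction.mem_stabilizer_iff.1 hg]
  exact smul_mem_smul_set hβ

namespace IsRootSystem

theorem s_mem_rootStab (hR : R.IsRootSystem) {β : R.V} (hβ : β ∈ R.Φ) : R.s β ∈ R.rootStab := by
  have hmaps : MapsTo (R.s β) R.Φ R.Φ := fun γ hγ => by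
    rw [hR.s_apply hβ]
    exact hR.reflection_stable β hβ γ hγ
  refine MulAction.mem_stabilizer_iff.2 (Subset.antisymm ?_ fun γ hγ => ?_)
  · rintro _ ⟨γ, hγ, rfl⟩
    exact hmaps hγ
  · exact ⟨R.s β γ, hmaps hγ, hR.s_s hβ γ⟩

theorem weylGroup_le_rootStab (hR : R.IsRootSystem) : R.weylGroup ≤ R.rootStab :=
  (Subgroup.closure_le _).2 <| range_subset_iff.2 fun i => hR.s_mem_rootStab (hR.simple_mem i)

theorem finite_rootStab (hR : R.IsRootSystem) : Finite R.rootStab := by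
  have : Finite R.Φ := hR.finite
  refine Finite.of_injective
    (fun g (β : R.Φ) => (⟨g.1 β, apply_mem_of_mem_rootStab g.2 β.2⟩ : R.Φ)) fun g h hgh => ?_
  exact Subtype.ext <| LinearEquiv.toLinearMap_injective <|
    LinearMap.ext_on hR.span_top fun β hβ => congrArg Subtype.val (congrFun hgh ⟨β, hβ⟩)

theorem finiteDimensional (hR : R.IsRootSystem) : FiniteDimensional ℚ R.V :=
  ⟨Submodule.fg_def.2 ⟨R.Φ, hR.finite, hR.span_top⟩⟩

noncomputable def invForm (hR : R.IsRootSystem) : LinearMap.BilinForm ℚ R.V :=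
  haveI := hR.finiteDimensional
  haveI := hR.finite_rootStab
  haveI := Fintype.ofFinite R.rootStab
  ∑ g : R.rootStab, (dotProductBilin ℚ ℚ).compl₁₂
    (g.1.trans (finBasis ℚ R.V).equivFun).toLinearMap
    (g.1.trans (finBasis ℚ R.V).equivFun).toLinearMap

theorem invForm_apply_apply_of_mem_rootStab (hR : R.IsRootSystem) {w : R.Aut}
    (hw : w ∈ R.rootStab) (x y : R.V) : hR.invForm (w x) (w y) = hR.invForm x y := by
  have := hR.finiteDimensional
  have := hR.finite_rootStab
  let := Fintype.ofFinite R.rootStab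
  simp only [invForm, LinearMap.BilinForm.sum_apply, LinearMap.compl₁₂_apply,
    dotProductBilin_apply_apply, LinearEquiv.coe_coe, LinearEquiv.trans_apply]
  exact Equiv.sum_comp (Equiv.mulRight (⟨w, hw⟩ : R.rootStab)) fun g : R.rootStab =>
    (finBasis ℚ R.V).equivFun (g.1 x) ⬝ᵥ (finBasis ℚ R.V).equivFun (g.1 y)

theorem invForm_self_pos (hR : R.IsRootSystem) {x : R.V} (hx : x ≠ 0) :
    0 < hR.invForm x x := by
  have := hR.finiteDimensional
  have := hR.finite_rootStab
  let := Fintype.ofFinite R.rootStab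
  simp only [invForm, LinearMap.BilinForm.sum_apply, LinearMap.compl₁₂_apply,
    dotProductBilin_apply_apply, LinearEquiv.coe_coe, LinearEquiv.trans_apply]
  have hnonneg (v : Fin (finrank ℚ R.V) → ℚ) : 0 ≤ v ⬝ᵥ v :=
    Finset.sum_nonneg fun i _ => mul_self_nonneg (v i)
  refine Finset.sum_pos' (fun g _ => hnonneg _) ⟨1, Finset.mem_univ _, (hnonneg _).lt_of_ne' ?_⟩
  rw [Ne, dotProduct_self_eq_zero, LinearEquiv.map_eq_zero_iff]
  exact hx

theorem coroot_mul_invForm_self (hR : R.IsRootSystem) {γ : R.V} (hγ : γ ∈ R.Φ) (x : R.V) :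
    R.coroot γ x * hR.invForm γ γ = 2 * hR.invForm x γ := by
  have h := hR.invForm_apply_apply_of_mem_rootStab (hR.s_mem_rootStab hγ) x γ
  rw [hR.s_apply_self hγ, hR.s_apply hγ, map_neg, map_sub, map_smul, LinearMap.sub_apply,
    LinearMap.smul_apply, smul_eq_mul] at h
  linarith

theorem coroot_eq_div (hR : R.IsRootSystem) {γ : R.V} (hγ : γ ∈ R.Φ) (x : R.V) :
    R.coroot γ x = 2 * hR.invForm x γ / hR.invForm γ γ :=
  eq_div_of_mul_eq (hR.invForm_self_pos (hR.ne_zero γ hγ)).ne' (hR.coroot_mul_invForm_self hγ x)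

theorem coroot_apply_of_mem_rootStab (hR : R.IsRootSystem) {w : R.Aut} (hw : w ∈ R.rootStab)
    {γ : R.V} (hγ : γ ∈ R.Φ) (x : R.V) : R.coroot (w γ) x = R.coroot γ (w⁻¹ x) := by
  rw [hR.coroot_eq_div (apply_mem_of_mem_rootStab hw hγ), hR.coroot_eq_div hγ,
    hR.invForm_apply_apply_of_mem_rootStab hw γ γ]
  conv_lhs => rw [← w.apply_symm_apply x, hR.invForm_apply_apply_of_mem_rootStab hw]
  rfl

theorem s_apply_of_mem_rootStab (hR : R.IsRootSystem) {w : R.Aut} (hw : w ∈ R.rootStab)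
    {γ : R.V} (hγ : γ ∈ R.Φ) : R.s (w γ) = w * R.s γ * w⁻¹ := by
  ext x
  rw [hR.s_apply (apply_mem_of_mem_rootStab hw hγ), LinearEquiv.mul_apply, LinearEquiv.mul_apply,
    hR.s_apply hγ, map_sub, map_smul, hR.coroot_apply_of_mem_rootStab hw hγ,
    ← LinearEquiv.mul_apply w, mul_inv_cancel]
  rfl

theorem s_eq_of_eq_smul (hR : R.IsRootSystem) {β γ : R.V} (hβ : β ∈ R.Φ) (hγ : γ ∈ R.Φ)
    {c : ℚ} (hc : c ≠ 0) (h : γ = c • β) : R.s γ = R.s β := by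
  have hpos := hR.invForm_self_pos (hR.ne_zero β hβ)
  ext x
  rw [hR.s_apply hγ, hR.s_apply hβ, hR.coroot_eq_div hγ, hR.coroot_eq_div hβ, h]
  simp only [map_smul, LinearMap.smul_apply, smul_eq_mul, smul_smul]
  congr 2
  field_simp

theorem coroot_nonneg_of_mem_pos (hR : R.IsRootSystem) {lam : R.V} (hdom : R.Dominant lam)
    {γ : R.V} (hγ : γ ∈ R.pos) : 0 ≤ R.coroot γ lam := by
  have hγΦ := hR.pos_subset hγ
  have hsimple (i : Fin R.r) : 0 ≤ hR.invForm lam (R.α i) := by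
    have := hR.coroot_mul_invForm_self (hR.simple_mem i) lam
    nlinarith [hdom i, hR.invForm_self_pos (hR.ne_zero _ (hR.simple_mem i))]
  obtain ⟨c, hc, hγc⟩ := hR.pos_nonneg_comb γ hγ
  rw [hR.coroot_eq_div hγΦ]
  refine div_nonneg (mul_nonneg zero_le_two ?_) (hR.invForm_self_pos (hR.ne_zero γ hγΦ)).le
  rw [hγc, map_sum]
  exact Finset.sum_nonneg fun i _ => by
    rw [map_smul, smul_eq_mul]
    exact mul_nonneg (hc i) (hsimple i)

theorem apply_nonneg_of_mem_pos (hR : R.IsRootSystem) {δ : Dual ℚ R.V}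
    (hδ : ∀ i : Fin R.r, 0 ≤ δ (R.α i)) {γ : R.V} (hγ : γ ∈ R.pos) : 0 ≤ δ γ := by
  obtain ⟨c, hc, rfl⟩ := hR.pos_nonneg_comb γ hγ
  rw [map_sum]
  exact Finset.sum_nonneg fun i _ => by
    rw [map_smul, smul_eq_mul]
    exact mul_nonneg (hc i) (hδ i)

theorem neg_mem_pos (hR : R.IsRootSystem) {γ : R.V} (hγ : γ ∈ R.Φ) (h : γ ∉ R.pos) :
    -γ ∈ R.pos :=
  ((hR.pos_or_neg γ hγ).resolve_left fun h' => h h'.1).2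

theorem S_mul_self (hR : R.IsRootSystem) (j : Fin R.r) : R.S j * R.S j = 1 :=
  hR.s_mul_self (hR.simple_mem j)

theorem S_inv (hR : R.IsRootSystem) (j : Fin R.r) : (R.S j)⁻¹ = R.S j :=
  hR.s_inv (hR.simple_mem j)

theorem S_apply_mem_pos_or (hR : R.IsRootSystem) (i : Fin R.r) {γ : R.V} (hγ : γ ∈ R.pos) :
    R.S i γ ∈ R.pos ∨ R.s γ = R.S i := by
  refine or_iff_not_imp_left.2 fun hneg => ?_
  have hγΦ := hR.pos_subset hγ
  obtain ⟨c, hc, hγc⟩ := hR.pos_nonneg_comb γ hγ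
  obtain ⟨d, hd, hγd⟩ := hR.pos_nonneg_comb _ <| hR.neg_mem_pos
    (apply_mem_of_mem_rootStab (hR.s_mem_rootStab (hR.simple_mem i)) hγΦ) hneg
  -- `γ + (-s_i γ) = ⟨γ, α_i^∨⟩ α_i` forces the coefficients of `γ` away from `i` to vanish
  have hsum : ∑ k, (c + d - Pi.single i (R.coroot (R.α i) γ) : Fin R.r → ℚ) k • R.α k = 0 := by
    simp only [Pi.sub_apply, Pi.add_apply, sub_smul, add_smul, Finset.sum_sub_distrib,
      Finset.sum_add_distrib, Pi.single_apply, ite_smul, zero_smul, Finset.sum_ite_eq',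
      Finset.mem_univ, if_true, ← hγc, ← hγd]
    rw [hR.s_apply (hR.simple_mem i)]
    abel
  have hcoef (k : Fin R.r) (hk : k ≠ i) : c k = 0 := by
    have := Fintype.linearIndependent_iff.1 hR.indep _ hsum k
    simp only [Pi.sub_apply, Pi.add_apply, Pi.single_eq_of_ne hk, sub_zero] at this
    linarith [hc k, hd k]
  have hγi : γ = c i • R.α i := by
    rw [hγc]
    exact Finset.sum_eq_single i (fun k _ hk => by rw [hcoef k hk, zero_smul]) (by simp)
  refine hR.s_eq_of_eq_smul (hR.simple_mem i) hγΦ (fun hci => ?_) hγi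
  exact hR.ne_zero γ hγΦ (by rw [hγi, hci, zero_smul])

end IsRootSystem

theorem S_mem_weylGroup (i : Fin R.r) : R.S i ∈ R.weylGroup :=
  Subgroup.subset_closure ⟨i, rfl⟩

theorem wordProd_cons (i : Fin R.r) (l : List (Fin R.r)) :
    R.wordProd (i :: l) = R.S i * R.wordProd l := by
  simp [wordProd]

theorem wordProd_concat (l : List (Fin R.r)) (j : Fin R.r) :
    R.wordProd (l ++ [j]) = R.wordProd l * R.S j := by
  simp [wordProd]

theorem wordProd_mem_weylGroup (l : List (Fin R.r)) : R.wordProd l ∈ R.weylGroup :=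
  Subgroup.list_prod_mem _ fun _ hx => by
    obtain ⟨i, -, rfl⟩ := List.mem_map.1 hx
    exact S_mem_weylGroup i

theorem len_wordProd_le (l : List (Fin R.r)) : R.len (R.wordProd l) ≤ l.length :=
  Nat.sInf_le ⟨l, rfl, rfl⟩

theorem exists_length_eq_len (l : List (Fin R.r)) :
    ∃ m : List (Fin R.r), m.length = R.len (R.wordProd l) ∧ R.wordProd m = R.wordProd l :=
  Nat.sInf_mem (s := {n | ∃ m : List (Fin R.r), m.length = n ∧ R.wordProd m = R.wordProd l})
    ⟨l.length, l, rfl, rfl⟩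

theorem Reduced.of_append_singleton {t : List (Fin R.r)} {j : Fin R.r}
    (h : R.Reduced (t ++ [j])) : R.Reduced t := by
  obtain ⟨m, hm, hmt⟩ := exists_length_eq_len t
  have := len_wordProd_le (m ++ [j])
  rw [wordProd_concat, hmt, ← wordProd_concat, h] at this
  simp only [List.length_append, List.length_singleton, hm] at this
  exact le_antisymm (len_wordProd_le t) (by omega)

theorem IsRootSystem.exists_wordProd_eq_mul_s (hR : R.IsRootSystem) {β : R.V} (hβ : β ∈ R.pos)
    (m : List (Fin R.r)) (hm : R.wordProd m β ∉ R.pos) :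
    ∃ m' : List (Fin R.r), m'.length < m.length ∧ R.wordProd m' = R.wordProd m * R.s β := by
  induction m with
  | nil => exact absurd hβ hm
  | cons i m ih =>
    rw [wordProd_cons, LinearEquiv.mul_apply] at hm
    by_cases hmβ : R.wordProd m β ∈ R.pos
    · have hw := hR.weylGroup_le_rootStab (wordProd_mem_weylGroup m)
      have hSi : R.S i = R.wordProd m * R.s β * (R.wordProd m)⁻¹ := by
        rw [← hR.s_apply_of_mem_rootStab hw (hR.pos_subset hβ)]
        exact ((hR.S_apply_mem_pos_or i hmβ).resolve_left hm).symm
      refine ⟨m, by simp, ?_⟩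
      rw [wordProd_cons, hSi, inv_mul_cancel_right, mul_assoc, hR.s_mul_self (hR.pos_subset hβ),
        mul_one]
    · obtain ⟨m', hlen, hm'⟩ := ih hmβ
      exact ⟨i :: m', by simpa using hlen, by rw [wordProd_cons, wordProd_cons, hm', mul_assoc]⟩

theorem IsRootSystem.wordProd_apply_mem_pos_of_reduced (hR : R.IsRootSystem)
    {t : List (Fin R.r)} {j : Fin R.r} (h : R.Reduced (t ++ [j])) :
    R.wordProd t (R.α j) ∈ R.pos := by
  by_contra hneg
  obtain ⟨m, hlen, hm⟩ := hR.exists_wordProd_eq_mul_s (hR.simple_pos j) t hneg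
  have := len_wordProd_le m
  rw [hm, ← RootData.S, ← wordProd_concat, h] at this
  simp only [List.length_append, List.length_singleton] at this
  omega

/-- A step up in the Bruhat order: `x < x s_β`. -/
def BruhatStep (R : RootData) (x y : R.Aut) : Prop :=
  ∃ β ∈ R.pos, x β ∈ R.pos ∧ R.s β ∈ R.weylGroup ∧ y = x * R.s β

theorem BruhatStep.mem_weylGroup {x y : R.Aut} (h : R.BruhatStep x y) (hx : x ∈ R.weylGroup) :
    y ∈ R.weylGroup := by
  obtain ⟨β, -, -, hβ, rfl⟩ := h
  exact mul_mem hx hβ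

theorem IsRootSystem.reflTransGen_bruhatStep_mul_S (hR : R.IsRootSystem) {x z : R.Aut}
    (h : ReflTransGen R.BruhatStep x z) {j : Fin R.r} (hz : z (R.α j) ∈ R.pos) :
    ReflTransGen R.BruhatStep (x * R.S j) (z * R.S j) := by
  induction h using ReflTransGen.head_induction_on with
  | refl => exact .refl
  | head hxy hyz ih =>
    obtain ⟨β, hβ, hxβ, hsβ, rfl⟩ := hxy
    rcases hR.S_apply_mem_pos_or j hβ with hSβ | hsS
    · have hconj := hR.s_apply_of_mem_rootStab (w := R.S j)
        (hR.s_mem_rootStab (hR.simple_mem j)) (hR.pos_subset hβ)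
      rw [hR.S_inv] at hconj
      refine .head ⟨R.S j β, hSβ, ?_, ?_, ?_⟩ ih
      · rwa [LinearEquiv.mul_apply, ← LinearEquiv.mul_apply (R.S j), hR.S_mul_self]
      · rw [hconj]
        exact mul_mem (mul_mem (S_mem_weylGroup j) hsβ) (S_mem_weylGroup j)
      · simp only [hconj, ← mul_assoc]
        rw [mul_assoc _ (R.S j) (R.S j), hR.S_mul_self, mul_one]
    · have := hyz.tail (⟨R.α j, hR.simple_pos j, hz, S_mem_weylGroup j, rfl⟩ :
        R.BruhatStep z (z * R.S j))
      rwa [hsS] at this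

theorem IsRootSystem.reflTransGen_bruhatStep_of_sublist (hR : R.IsRootSystem)
    {l l' : List (Fin R.r)} (hl : R.Reduced l) (h : l'.Sublist l) :
    ReflTransGen R.BruhatStep (R.wordProd l') (R.wordProd l) := by
  induction l using List.reverseRecOn generalizing l' with
  | nil => rw [List.sublist_nil.1 h]
  | append_singleton t j ih =>
    have ht := hl.of_append_singleton
    have hasc := hR.wordProd_apply_mem_pos_of_reduced hl
    obtain ⟨l₁, l₂, rfl, h₁, h₂⟩ := List.sublist_append_iff.1 h
    rw [wordProd_concat]
    rcases List.sublist_singleton.1 h₂ with rfl | rfl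
    · rw [List.append_nil]
      exact (ih ht h₁).tail ⟨R.α j, hR.simple_pos j, hasc, S_mem_weylGroup j, rfl⟩
    · rw [wordProd_concat]
      exact hR.reflTransGen_bruhatStep_mul_S (ih ht h₁) hasc

/-- The group `W_λ`. -/
noncomputable def weightStab (R : RootData) (lam : R.V) : Subgroup R.Aut :=
  R.weylGroup ⊓ MulAction.stabilizer R.Aut lam

theorem dualAct_mul (a b : R.Aut) (δ : Dual ℚ R.V) :
    R.dualAct (a * b) δ = R.dualAct a (R.dualAct b δ) :=
  rfl

/-- The group `W_δ`. -/
noncomputable def coweightStab (R : RootData) (δ : Dual ℚ R.V) : Subgroup R.Aut where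
  carrier := {b | b ∈ R.weylGroup ∧ R.dualAct b δ = δ}
  one_mem' := ⟨one_mem _, rfl⟩
  mul_mem' := fun ⟨ha, ha'⟩ ⟨hb, hb'⟩ => ⟨mul_mem ha hb, by rw [dualAct_mul, hb', ha']⟩
  inv_mem' := fun {b} ⟨hb, hb'⟩ => ⟨inv_mem hb, by
    conv_lhs => rw [← hb', ← dualAct_mul, inv_mul_cancel]
    rfl⟩

theorem setOf_eq_doubleCoset (lam : R.V) (δ : Dual ℚ R.V) (x : R.Aut) :
    {g : R.Aut | ∃ a b : R.Aut, a ∈ R.weylGroup ∧ a lam = lam ∧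
        b ∈ R.weylGroup ∧ R.dualAct b δ = δ ∧ g = a * x * b} =
      doubleCoset x (R.weightStab lam) (R.coweightStab δ) := by
  ext g
  simp [mem_doubleCoset, weightStab, coweightStab, and_assoc]

namespace IsRootSystem

theorem s_mem_weightStab (hR : R.IsRootSystem) {β : R.V} (hβ : β ∈ R.Φ)
    (hW : R.s β ∈ R.weylGroup) {lam : R.V} (h : R.coroot β lam = 0) :
    R.s β ∈ R.weightStab lam :=
  ⟨hW, show R.s β lam = lam by rw [hR.s_apply hβ, h, zero_smul, sub_zero]⟩

theorem s_mem_coweightStab (hR : R.IsRootSystem) {β : R.V} (hβ : β ∈ R.Φ)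
    (hW : R.s β ∈ R.weylGroup) {δ : Dual ℚ R.V} (h : δ β = 0) :
    R.s β ∈ R.coweightStab δ :=
  ⟨hW, LinearMap.ext fun x => by
    change δ ((R.s β)⁻¹ x) = δ x
    rw [hR.s_inv hβ, hR.s_apply hβ, map_sub, map_smul, h, smul_zero, sub_zero]⟩

theorem dualAct_mul_s_apply (hR : R.IsRootSystem) {x : R.Aut} (hx : x ∈ R.rootStab)
    {β : R.V} (hβ : β ∈ R.Φ) (δ : Dual ℚ R.V) (lam : R.V) :
    R.dualAct (x * R.s β) δ lam = R.dualAct x δ lam - R.coroot (x β) lam * δ β := by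
  change δ ((x * R.s β)⁻¹ lam) = δ (x⁻¹ lam) - _
  rw [mul_inv_rev, hR.s_inv hβ, LinearEquiv.mul_apply, hR.s_apply hβ, map_sub, map_smul,
    smul_eq_mul, hR.coroot_apply_of_mem_rootStab hx hβ]

variable {lam : R.V} {δ : Dual ℚ R.V}

theorem dualAct_apply_le_of_bruhatStep (hR : R.IsRootSystem) (hdom : R.Dominant lam)
    (hδ : ∀ i : Fin R.r, 0 ≤ δ (R.α i)) {x y : R.Aut} (h : R.BruhatStep x y)
    (hx : x ∈ R.weylGroup) :
    R.dualAct y δ lam ≤ R.dualAct x δ lam ∧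
      (R.dualAct y δ lam = R.dualAct x δ lam →
        y ∈ doubleCoset x (R.weightStab lam) (R.coweightStab δ)) := by
  obtain ⟨β, hβ, hxβ, hsβ, rfl⟩ := h
  have hβΦ := hR.pos_subset hβ
  have hxR := hR.weylGroup_le_rootStab hx
  have hc := hR.coroot_nonneg_of_mem_pos hdom hxβ
  have hd := hR.apply_nonneg_of_mem_pos hδ hβ
  rw [hR.dualAct_mul_s_apply hxR hβΦ]
  refine ⟨sub_le_self _ (mul_nonneg hc hd), fun heq => ?_⟩
  rcases mul_eq_zero.1 (by linarith : R.coroot (x β) lam * δ β = 0) with hc0 | hd0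
  · have hconj := hR.s_apply_of_mem_rootStab hxR hβΦ
    have hW : R.s (x β) ∈ R.weylGroup := by
      rw [hconj]
      exact mul_mem (mul_mem hx hsβ) (inv_mem hx)
    refine mem_doubleCoset.2 ⟨_, hR.s_mem_weightStab (hR.pos_subset hxβ) hW hc0, 1, one_mem _, ?_⟩
    rw [hconj, mul_one, inv_mul_cancel_right]
  · exact mem_doubleCoset.2 ⟨1, one_mem _, _, hR.s_mem_coweightStab hβΦ hsβ hd0, by rw [one_mul]⟩

theorem dualAct_apply_le_of_reflTransGen (hR : R.IsRootSystem) (hdom : R.Dominant lam)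
    (hδ : ∀ i : Fin R.r, 0 ≤ δ (R.α i)) {x z : R.Aut} (h : ReflTransGen R.BruhatStep x z)
    (hx : x ∈ R.weylGroup) :
    R.dualAct z δ lam ≤ R.dualAct x δ lam ∧
      (R.dualAct z δ lam = R.dualAct x δ lam →
        z ∈ doubleCoset x (R.weightStab lam) (R.coweightStab δ)) := by
  induction h using ReflTransGen.head_induction_on with
  | refl => exact ⟨le_rfl, fun _ => mem_doubleCoset_self _ _ _⟩
  | head hxy _ ih =>
    obtain ⟨hyx, hyx_eq⟩ := hR.dualAct_apply_le_of_bruhatStep hdom hδ hxy hx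
    obtain ⟨hzy, hzy_eq⟩ := ih (hxy.mem_weylGroup hx)
    refine ⟨hzy.trans hyx, fun heq => ?_⟩
    rw [← doubleCoset_eq_of_mem (hyx_eq (by linarith))]
    exact hzy_eq (by linarith)

end IsRootSystem

end RootData

theorem statement12_general (R : RootData) (hR : R.IsRootSystem)
    (lam : R.V) (hdom : R.Dominant lam)
    (δ : Module.Dual ℚ R.V) (hδ : ∀ i : Fin R.r, 0 ≤ δ (R.α i))
    (u v : R.Aut)
    (hle : R.BruhatLE v u)
    (heq : R.dualAct u δ lam = R.dualAct v δ lam) :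
    {g : R.Aut | ∃ a b : R.Aut, a ∈ R.weylGroup ∧ a lam = lam ∧
        b ∈ R.weylGroup ∧ R.dualAct b δ = δ ∧ g = a * u * b} =
      {g : R.Aut | ∃ a b : R.Aut, a ∈ R.weylGroup ∧ a lam = lam ∧
        b ∈ R.weylGroup ∧ R.dualAct b δ = δ ∧ g = a * v * b} := by
  obtain ⟨l, hl, rfl, l', hl', rfl⟩ := hle
  have hchain := hR.reflTransGen_bruhatStep_of_sublist hl hl'
  have hmem := (hR.dualAct_apply_le_of_reflTransGen hdom hδ hchain
    (RootData.wordProd_mem_weylGroup l')).2 heq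
  rw [RootData.setOf_eq_doubleCoset, RootData.setOf_eq_doubleCoset,
    DoubleCoset.doubleCoset_eq_of_mem hmem]

theorem statement12 (R : RootData) (hR : R.IsRootSystem)
    (lam : R.V) (hdom : R.Dominant lam)
    (δ : Module.Dual ℚ R.V) (hδ : ∀ i : Fin R.r, 0 ≤ δ (R.α i))
    (u v : R.Aut) (hu : u ∈ R.weylGroup) (hv : v ∈ R.weylGroup)
    (hle : R.BruhatLE v u)
    (heq : R.dualAct u δ lam = R.dualAct v δ lam) :
    {g : R.Aut | ∃ a b : R.Aut, a ∈ R.weylGroup ∧ a lam = lam ∧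
        b ∈ R.weylGroup ∧ R.dualAct b δ = δ ∧ g = a * u * b} =
      {g : R.Aut | ∃ a b : R.Aut, a ∈ R.weylGroup ∧ a lam = lam ∧
        b ∈ R.weylGroup ∧ R.dualAct b δ = δ ∧ g = a * v * b} :=
  statement12_general R hR lam hdom δ hδ u v hle heq
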